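/- Let d ≥ 1, σ > 0, let F : ℝ^d → ℝ be measurable, let y ∈ ℝ, and for δ ∈ ℝ^d define h(δ) := P_{ζ ~ N(0, σ²I_d)}[F(δ + ζ) ≤ y]. Let B ≥ 0 and let δ ∈ ℝ^d satisfy ‖δ‖₂ ≤ B. If 0 < h(0) < 1 and 0 < h(δ) < 1, then Φ⁻¹(h(δ)) ≤ Φ⁻¹(h(0)) + B/σ; equivalently, P[F(δ + ζ) ≤ y] ≤ Φ(Φ⁻¹(P[F(ζ) ≤ y]) + B/σ). -/

import Mathlib

open MeasureTheory ProbabilityTheory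

/-- The centered Gaussian product measure `N(0, σ² I)` on Euclidean space. -/
noncomputable def gaussPi (ι : Type*) [Fintype ι] (σ : ℝ) :
    Measure (EuclideanSpace ℝ ι) :=
  (Measure.pi fun _ : ι => gaussianReal 0 ⟨σ ^ 2, sq_nonneg σ⟩).map
    (MeasurableEquiv.toLp 2 (ι → ℝ))

/-- The cumulative distribution function `Φ` of the standard one-dimensional Gaussian. -/
noncomputable def stdGaussianCDF (x : ℝ) : ℝ :=
  (gaussianReal 0 1 (Set.Iic x)).toReal

/-- The inverse `Φ⁻¹` of the standard Gaussian CDF (on `(0,1)`). -/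
noncomputable def probit : ℝ → ℝ :=
  Function.invFun stdGaussianCDF

/-! Shifting the standard Gaussian measure by `a` multiplies it by the Cameron–Martin density
`exp (⟪a, x⟫ - ‖a‖ ^ 2 / 2)`, an increasing function of `⟪a, x⟫`. By the Neyman–Pearson argument,
among all sets of standard Gaussian measure at most `Φ t` the half-space
`{x | -t ≤ ⟪a / ‖a‖, x⟫}` gains the most mass under the shift, and that mass is `Φ (t + ‖a‖)`.
Rescaling by `σ` turns `N(0, σ² I)` into the standard Gaussian and the shift `δ` into `δ / σ`. -/

open Real Set
open scoped NNReal ENNReal RealInnerProductSpace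

namespace MeasureTheory

section Pi

variable {ι : Type*} [Fintype ι] {α : ι → Type*} [∀ i, MeasurableSpace (α i)]
  {μ : ∀ i, Measure (α i)} [∀ i, IsProbabilityMeasure (μ i)] {f : ∀ i, α i → ℝ≥0∞}

lemma lintegral_pi_prod_eq_prod (hf : ∀ i, Measurable (f i)) :
    ∫⁻ x, ∏ i, f i (x i) ∂Measure.pi μ = ∏ i, ∫⁻ x, f i x ∂μ i := by
  refine (lintegral_prod_eq_prod_lintegral_of_indepFun _ (fun i (x : ∀ j, α j) => f i (x i))
    (iIndepFun_pi fun i => (hf i).aemeasurable)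
    fun i => (hf i).comp (measurable_pi_apply i)).trans ?_
  exact Finset.prod_congr rfl fun i _ => (measurePreserving_eval μ i).lintegral_comp (hf i)

lemma pi_eq_withDensity_prod {ν : ∀ i, Measure (α i)} [∀ i, SigmaFinite (ν i)]
    (hf : ∀ i, Measurable (f i)) (hν : ∀ i, ν i = (μ i).withDensity (f i)) :
    Measure.pi ν = (Measure.pi μ).withDensity fun x => ∏ i, f i (x i) := by
  refine Measure.pi_eq fun s hs => ?_
  have hbox : (univ.pi s).indicator (fun x => ∏ i, f i (x i))
      = fun x => ∏ i, (s i).indicator (f i) (x i) := by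
    ext x
    classical
    simp only [Set.indicator_apply, Set.mem_univ_pi, Finset.prod_ite_zero, Finset.mem_univ,
      true_implies]
  rw [withDensity_apply _ (.univ_pi hs), ← lintegral_indicator (.univ_pi hs), hbox,
    lintegral_pi_prod_eq_prod fun i => (hf i).indicator (hs i)]
  refine Finset.prod_congr rfl fun i _ => ?_
  rw [hν, withDensity_apply _ (hs i), lintegral_indicator (hs i)]

end Pi

lemma Measure.map_withDensity_comp {α β : Type*} [MeasurableSpace α]
    [MeasurableSpace β] (μ : Measure α) {g : α → β} (hg : Measurable g) {ρ : β → ℝ≥0∞}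
    (hρ : Measurable ρ) : (μ.withDensity (ρ ∘ g)).map g = (μ.map g).withDensity ρ := by
  ext s hs
  rw [Measure.map_apply hg hs, withDensity_apply _ (hg hs), withDensity_apply _ hs,
    setLIntegral_map hs hρ hg]
  rfl

lemma withDensity_apply_le_of_measure_le {α : Type*} [MeasurableSpace α]
    {μ : Measure α} [IsFiniteMeasure μ] {ρ : α → ℝ≥0∞} (hρ : Measurable ρ) {A H : Set α}
    (hA : MeasurableSet A) (hH : MeasurableSet H) {k : ℝ≥0∞} (hρH : ∀ x ∈ H, k ≤ ρ x)
    (hρHc : ∀ x ∉ H, ρ x ≤ k) (hAH : μ A ≤ μ H) :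
    μ.withDensity ρ A ≤ μ.withDensity ρ H := by
  set ν := μ.withDensity ρ
  have hdiff : μ (A \ H) ≤ μ (H \ A) := by
    rw [← measure_inter_add_sdiff A hH, ← measure_inter_add_sdiff H hA, inter_comm] at hAH
    exact (ENNReal.add_le_add_iff_left (measure_ne_top μ _)).1 hAH
  have hAH_le : ν (A \ H) ≤ k * μ (A \ H) := by
    rw [withDensity_apply _ (hA.diff hH), ← setLIntegral_const]
    exact setLIntegral_mono measurable_const fun x hx => hρHc x hx.2
  have hHA_ge : k * μ (H \ A) ≤ ν (H \ A) := by
    rw [withDensity_apply _ (hH.diff hA), ← setLIntegral_const]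
    exact setLIntegral_mono hρ fun x hx => hρH x hx.1
  calc ν A = ν (A ∩ H) + ν (A \ H) := (measure_inter_add_sdiff A hH).symm
    _ ≤ ν (A ∩ H) + k * μ (H \ A) := add_le_add le_rfl (hAH_le.trans (by gcongr))
    _ ≤ ν (H ∩ A) + ν (H \ A) := by rw [inter_comm]; exact add_le_add le_rfl hHA_ge
    _ = ν H := measure_inter_add_sdiff H hA

end MeasureTheory

namespace ProbabilityTheory

lemma continuous_cdf (μ : Measure ℝ) [IsProbabilityMeasure μ] [NullSingletonClass μ] :
    Continuous (cdf μ) := by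
  refine continuous_iff_continuousAt.2 fun x => ?_
  rw [(monotone_cdf μ).continuousAt_iff_leftLim_eq_rightLim, StieltjesFunction.rightLim_eq]
  have h := (cdf μ).measure_singleton x
  rw [measure_cdf, measure_singleton, eq_comm, ENNReal.ofReal_eq_zero, sub_nonpos] at h
  exact le_antisymm ((monotone_cdf μ).leftLim_le le_rfl) h

lemma strictMono_cdf (μ : Measure ℝ) [IsProbabilityMeasure μ] (hμ : volume ≪ μ) :
    StrictMono (cdf μ) := by
  intro a b hab
  have hpos : 0 < μ (Ioc a b) := by
    refine pos_iff_ne_zero.2 fun h0 => ?_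
    have := hμ h0
    simp only [Real.volume_Ioc, ENNReal.ofReal_eq_zero, sub_nonpos] at this
    exact this.not_gt hab
  rwa [← measure_cdf μ, StieltjesFunction.measure_Ioc, ENNReal.ofReal_pos, sub_pos] at hpos

lemma gaussianReal_eq_withDensity (m : ℝ) {v : ℝ≥0} (hv : v ≠ 0) :
    gaussianReal m v = (gaussianReal 0 v).withDensity
      (fun x => ENNReal.ofReal (exp ((m * x - m ^ 2 / 2) / v))) := by
  rw [gaussianReal_of_var_ne_zero _ hv, gaussianReal_of_var_ne_zero _ hv,
    ← withDensity_mul _ (measurable_gaussianPDF 0 v) (by fun_prop)]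
  congr 1
  ext x
  simp only [Pi.mul_apply, gaussianPDF]
  rw [← ENNReal.ofReal_mul (gaussianPDFReal_nonneg 0 v x)]
  simp only [gaussianPDFReal_def]
  rw [mul_assoc _ (rexp _), ← exp_add]
  congr 3
  field_simp
  ring

lemma pi_gaussianReal_eq_withDensity {ι : Type*} [Fintype ι] (m : ι → ℝ) {v : ℝ≥0} (hv : v ≠ 0) :
    Measure.pi (fun i => gaussianReal (m i) v) =
      (Measure.pi fun _ : ι => gaussianReal 0 v).withDensity
        fun x => ENNReal.ofReal (exp (∑ i, (m i * x i - m i ^ 2 / 2) / v)) := by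
  rw [pi_eq_withDensity_prod (fun i => by fun_prop) fun i => gaussianReal_eq_withDensity (m i) hv]
  congr with x
  rw [← ENNReal.ofReal_prod_of_nonneg fun i _ => (exp_pos _).le, ← exp_sum]

end ProbabilityTheory

lemma stdGaussianCDF_eq_cdf : stdGaussianCDF = cdf (gaussianReal 0 1) :=
  funext fun x => (cdf_eq_real _ x).symm

lemma continuous_stdGaussianCDF : Continuous stdGaussianCDF := by
  have := nullSingletonClass_gaussianReal (μ := 0) one_ne_zero
  rw [stdGaussianCDF_eq_cdf]
  exact continuous_cdf _

lemma strictMono_stdGaussianCDF : StrictMono stdGaussianCDF := by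
  rw [stdGaussianCDF_eq_cdf]
  exact strictMono_cdf _ (gaussianReal_absolutelyContinuous' 0 one_ne_zero)

lemma stdGaussianCDF_probit {p : ℝ} (hp : p ∈ Ioo 0 1) : stdGaussianCDF (probit p) = p := by
  refine Function.invFun_eq (mem_range_of_exists_le_of_exists_ge continuous_stdGaussianCDF ?_ ?_)
  · rw [stdGaussianCDF_eq_cdf]
    exact ((tendsto_cdf_atBot _).eventually (eventually_le_nhds hp.1)).exists
  · rw [stdGaussianCDF_eq_cdf]
    exact ((tendsto_cdf_atTop _).eventually (eventually_ge_nhds hp.2)).exists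

lemma probit_le_iff {p : ℝ} (hp : p ∈ Ioo 0 1) (x : ℝ) :
    probit p ≤ x ↔ p ≤ stdGaussianCDF x := by
  rw [← strictMono_stdGaussianCDF.le_iff_le, stdGaussianCDF_probit hp]

lemma gaussianReal_real_Ici (x : ℝ) : (gaussianReal 0 1).real (Ici x) = stdGaussianCDF (-x) := by
  have hsymm : (gaussianReal 0 1).map (fun x => -x) = gaussianReal 0 1 := by
    rw [gaussianReal_map_neg, neg_zero]
  rw [stdGaussianCDF_eq_cdf, cdf_eq_real, ← hsymm,
    map_measureReal_apply measurable_neg measurableSet_Iic]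
  congr 1
  ext
  simp

namespace ProbabilityTheory

variable {E : Type*} [NormedAddCommGroup E] [InnerProductSpace ℝ E] [FiniteDimensional ℝ E]
  [MeasurableSpace E] [BorelSpace E]

/-- The Cameron–Martin formula in finite dimension. -/
lemma stdGaussian_map_const_add (a : E) :
    (stdGaussian E).map (a + ·) = (stdGaussian E).withDensity
      fun x => ENNReal.ofReal (exp (⟪a, x⟫ - ‖a‖ ^ 2 / 2)) := by
  set b := stdOrthonormalBasis ℝ E
  set T : (Fin (Module.finrank ℝ E) → ℝ) → E := fun x => ∑ i, x i • b i
  have hT : Measurable T := by fun_prop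
  set c := fun i => ⟪b i, a⟫
  have hshift : (a + ·) ∘ T = T ∘ fun x i => c i + x i := by
    ext x
    simp only [Function.comp_apply, T, add_smul, Finset.sum_add_distrib, c, b.sum_repr']
  have hdensity : (fun x => ENNReal.ofReal (exp (∑ i, (c i * x i - c i ^ 2 / 2) / (1 : ℝ≥0))))
      = (fun x => ENNReal.ofReal (exp (⟪a, x⟫ - ‖a‖ ^ 2 / 2))) ∘ T := by
    ext x
    simp only [Function.comp_apply, T, inner_sum, inner_smul_right, NNReal.coe_one, div_one,
      Finset.sum_sub_distrib, ← Finset.sum_div, c, real_inner_comm, mul_comm, b.sum_sq_inner_left]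
  rw [stdGaussian_eq_map_pi_orthonormalBasis b, Measure.map_map (by fun_prop) hT, hshift,
    ← Measure.map_map hT (by fun_prop), Measure.pi_map_pi (fun i => by fun_prop)]
  simp only [gaussianReal_map_const_add, zero_add]
  rw [pi_gaussianReal_eq_withDensity c one_ne_zero, hdensity,
    Measure.map_withDensity_comp _ hT (by fun_prop)]

lemma stdGaussian_map_inner (u : E) :
    (stdGaussian E).map (⟪u, ·⟫) = gaussianReal 0 (‖u‖ ^ 2).toNNReal := by
  have h := IsGaussian.map_eq_gaussianReal (μ := stdGaussian E) (innerSL ℝ u)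
  rwa [integral_strongDual_stdGaussian, variance_dual_stdGaussian, innerSL_apply_norm] at h

lemma stdGaussian_real_inner_ge {u : E} (hu : ‖u‖ = 1) (s : ℝ) :
    (stdGaussian E).real {x | s ≤ ⟪u, x⟫} = stdGaussianCDF (-s) := by
  have hlaw := stdGaussian_map_inner u
  rw [hu, one_pow, Real.toNNReal_one] at hlaw
  rw [← gaussianReal_real_Ici, ← hlaw, map_measureReal_apply (by fun_prop) measurableSet_Ici]
  rfl

theorem stdGaussian_real_preimage_add_le {A : Set E} (hA : MeasurableSet A) {t : ℝ}
    (hAt : (stdGaussian E).real A ≤ stdGaussianCDF t) (a : E) :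
    (stdGaussian E).real ((a + ·) ⁻¹' A) ≤ stdGaussianCDF (t + ‖a‖) := by
  rcases eq_or_ne a 0 with rfl | ha
  · simpa using hAt
  set r := ‖a‖
  have hr : 0 < r := norm_pos_iff.2 ha
  set u := r⁻¹ • a
  have hu : ‖u‖ = 1 := norm_smul_inv_norm ha
  have hinner : ∀ x, ⟪a, x⟫ = r * ⟪u, x⟫ := fun x => by
    rw [real_inner_smul_left, mul_inv_cancel_left₀ hr.ne']
  set H := {x : E | -t ≤ ⟪u, x⟫}
  have hH : MeasurableSet H := measurableSet_le (by fun_prop) (by fun_prop)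
  have hAH : stdGaussian E A ≤ stdGaussian E H := by
    rw [← ENNReal.toReal_le_toReal (measure_ne_top _ _) (measure_ne_top _ _), ← measureReal_def,
      ← measureReal_def, stdGaussian_real_inner_ge hu, neg_neg]
    exact hAt
  have hshiftH : (a + ·) ⁻¹' H = {x | -(t + r) ≤ ⟪u, x⟫} := by
    ext x
    have : ⟪u, a⟫ = r := by
      rw [real_inner_comm, hinner, real_inner_self_eq_norm_sq, hu, one_pow, mul_one]
    simp only [H, mem_preimage, mem_ofPred_eq, inner_add_right, this]
    constructor <;> intro h <;> linarith
  have hNP : (stdGaussian E).map (a + ·) A ≤ (stdGaussian E).map (a + ·) H := by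
    rw [stdGaussian_map_const_add]
    refine withDensity_apply_le_of_measure_le (by fun_prop) hA hH
      (k := ENNReal.ofReal (exp (r * -t - r ^ 2 / 2))) (fun x hx => ?_) (fun x hx => ?_) hAH
    · rw [hinner]
      gcongr
      exact hx
    · rw [hinner]
      gcongr
      exact (not_le.1 hx).le
  rw [measureReal_def, ← Measure.map_apply (by fun_prop) hA]
  refine (ENNReal.toReal_mono (measure_ne_top _ _) hNP).trans_eq ?_
  rw [Measure.map_apply (by fun_prop) hH, ← measureReal_def, hshiftH,
    stdGaussian_real_inner_ge hu, neg_neg]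

end ProbabilityTheory

lemma gaussPi_eq_map_stdGaussian (ι : Type*) [Fintype ι] (σ : ℝ) :
    gaussPi ι σ = (stdGaussian (EuclideanSpace ℝ ι)).map (σ • ·) := by
  have hcomm : (σ • ·) ∘ WithLp.toLp 2 = WithLp.toLp 2 ∘ fun (x : ι → ℝ) i => σ * x i := rfl
  rw [gaussPi, ← map_pi_eq_stdGaussian, Measure.map_map (by fun_prop) (by fun_prop), hcomm,
    ← Measure.map_map (by fun_prop) (by fun_prop), Measure.pi_map_pi (fun i => by fun_prop)]
  have hscale : (gaussianReal 0 1).map (σ * ·) = gaussianReal 0 ⟨σ ^ 2, sq_nonneg σ⟩ := by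
    rw [gaussianReal_map_const_mul, mul_zero, mul_one]
    rfl
  rw [hscale]
  rfl

theorem probit_tail_shift_bound_general
    (d : ℕ) (σ : ℝ) (hσ : 0 < σ)
    (F : EuclideanSpace ℝ (Fin d) → ℝ) (hF : Measurable F) (y : ℝ)
    (h : EuclideanSpace ℝ (Fin d) → ℝ)
    (hh : ∀ δ, h δ = ((gaussPi (Fin d) σ) {ζ | F (δ + ζ) ≤ y}).toReal)
    (B : ℝ)
    (δ : EuclideanSpace ℝ (Fin d)) (hδ : ‖δ‖ ≤ B)
    (h0 : 0 < h 0 ∧ h 0 < 1) (hd' : 0 < h δ ∧ h δ < 1) :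
    probit (h δ) ≤ probit (h 0) + B / σ ∧
      h δ ≤ stdGaussianCDF (probit (h 0) + B / σ) := by
  set γ := stdGaussian (EuclideanSpace ℝ (Fin d))
  set A := {ζ | F (σ • ζ) ≤ y}
  have hA : MeasurableSet A := measurableSet_le (by fun_prop) measurable_const
  have hh_shift : ∀ δ', h δ' = γ.real ((σ⁻¹ • δ' + ·) ⁻¹' A) := fun δ' => by
    rw [hh, gaussPi_eq_map_stdGaussian, ← measureReal_def,
      map_measureReal_apply (by fun_prop) (measurableSet_le (by fun_prop) measurable_const)]
    congr 1
    ext ζ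
    simp only [A, mem_preimage, mem_ofPred_eq, smul_add, smul_inv_smul₀ hσ.ne']
  have hbound : h δ ≤ stdGaussianCDF (probit (h 0) + B / σ) := calc
    h δ = γ.real ((σ⁻¹ • δ + ·) ⁻¹' A) := hh_shift δ
    _ ≤ stdGaussianCDF (probit (h 0) + ‖σ⁻¹ • δ‖) := by
      refine stdGaussian_real_preimage_add_le hA (le_of_eq ?_) _
      rw [stdGaussianCDF_probit h0, hh_shift 0, smul_zero]
      simp only [zero_add, preimage_id', γ]
    _ ≤ stdGaussianCDF (probit (h 0) + B / σ) := by
      refine strictMono_stdGaussianCDF.monotone (add_le_add le_rfl ?_)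
      rw [norm_smul, norm_inv, Real.norm_of_nonneg hσ.le, inv_mul_eq_div]
      gcongr
  exact ⟨(probit_le_iff hd' _).2 hbound, hbound⟩

/-- With `h(δ) = P_{ζ ~ N(0,σ²I_d)}[F(δ+ζ) ≤ y]`, for `‖δ‖₂ ≤ B` with
`h(0), h(δ) ∈ (0,1)` we have `Φ⁻¹(h(δ)) ≤ Φ⁻¹(h(0)) + B/σ`; equivalently,
`P[F(δ+ζ) ≤ y] ≤ Φ(Φ⁻¹(P[F(ζ) ≤ y]) + B/σ)`. -/
theorem probit_tail_shift_bound
    (d : ℕ) (hd : 1 ≤ d) (σ : ℝ) (hσ : 0 < σ)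
    (F : EuclideanSpace ℝ (Fin d) → ℝ) (hF : Measurable F) (y : ℝ)
    (h : EuclideanSpace ℝ (Fin d) → ℝ)
    (hh : ∀ δ, h δ = ((gaussPi (Fin d) σ) {ζ | F (δ + ζ) ≤ y}).toReal)
    (B : ℝ) (hB : 0 ≤ B)
    (δ : EuclideanSpace ℝ (Fin d)) (hδ : ‖δ‖ ≤ B)
    (h0 : 0 < h 0 ∧ h 0 < 1) (hd' : 0 < h δ ∧ h δ < 1) :
    probit (h δ) ≤ probit (h 0) + B / σ ∧
      h δ ≤ stdGaussianCDF (probit (h 0) + B / σ) :=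
  probit_tail_shift_bound_general d σ hσ F hF y h hh B δ hδ h0 hd'
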